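/- arXiv:2412.00778 — 2 statements merged into one kernel-verified Lean document; each statement's English description precedes it below -/
import Mathlib

section
/- Lemma 4. Let λ_1, …, λ_N ∈ ℂ have positive real parts, let ν ∈ ℂ, and let Γ′ be the additive semigroup generated by 1, λ_1, …, λ_N. Then there exists a finitely generated additive semigroup Γ″ ⊂ ℂ, all of whose generators have positive real part, such that every element of the set −λ_N − ν + Γ′ having positive real part belongs to Γ″. (Consequently, in Lemmas 2 and 3 the coefficients a_p belong to ℂ{x^{Γ″}}.) -/
/-!
Write `c = -λ_N - ν` and let `Γ'` be generated by the finite family `1, λ_1, …, λ_N` of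
positive real part. Take as generators of `Γ''` the generators of `Γ'` together with all
`c + w`, `w ∈ Γ'`, of positive real part at most `M`, where `M` bounds `Re c` and the real parts
of the generators of `Γ'`; there are finitely many such `w` because every generator has real
part bounded below. Adding a generator `x` of `Γ'` to `w` keeps `c + x + w` in `Γ''`: either
`c + w` already has positive real part and lies in `Γ''`, or `Re (c + x + w) ≤ Re x ≤ M`
and `c + x + w` is itself one of the new generators.
-/

noncomputable section

/-- Membership in the additive semigroup generated by `g 0, …, g (τ-1)`. -/
def InSemigroup {τ : ℕ} (g : Fin τ → ℂ) (z : ℂ) : Prop :=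
  ∃ m : Fin τ → ℕ, m ≠ 0 ∧ z = ∑ i, (m i : ℂ) * g i

/-- Membership in the additive semigroup `Γ'` generated by `1, λ_1, …, λ_N`. -/
def InGammaPrime {N : ℕ} (lam : Fin N → ℂ) (z : ℂ) : Prop :=
  ∃ (m0 : ℕ) (m : Fin N → ℕ), ¬(m0 = 0 ∧ m = 0) ∧
    z = (m0 : ℂ) + ∑ k, (m k : ℂ) * lam k

open Set AddSubmonoid

theorem InSemigroup.of_mem_closure {τ : ℕ} {g : Fin τ → ℂ} {z : ℂ}
    (hz : z ∈ AddSubmonoid.closure (range g)) (hz0 : z ≠ 0) : InSemigroup g z := by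
  obtain ⟨m, rfl⟩ := mem_closure_range_iff_of_fintype.mp hz
  refine ⟨m, ?_, by simp [nsmul_eq_mul]⟩
  rintro rfl
  simp at hz0

theorem InGammaPrime.mem_closure_range_cons {N : ℕ} {lam : Fin N → ℂ} {z : ℂ}
    (hz : InGammaPrime lam z) :
    z ∈ AddSubmonoid.closure (range (Fin.cons 1 lam : Fin (N + 1) → ℂ)) := by
  obtain ⟨m0, m, -, rfl⟩ := hz
  exact mem_closure_range_iff_of_fintype.mpr
    ⟨Fin.cons m0 m, by simp [Fin.sum_univ_succ, nsmul_eq_mul]⟩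

theorem finite_setOf_mem_closure_range_re_le {ι : Type*} [Finite ι] (h : ι → ℂ)
    (hpos : ∀ i, 0 < (h i).re) (R : ℝ) :
    {w | w ∈ AddSubmonoid.closure (range h) ∧ w.re ≤ R}.Finite := by
  have := Fintype.ofFinite ι
  refine ((Set.Finite.pi' fun i => finite_Iic ⌊R / (h i).re⌋₊).image
    fun m => ∑ i, m i • h i).subset ?_
  rintro _ ⟨hw, hR⟩
  obtain ⟨m, rfl⟩ := mem_closure_range_iff_of_fintype.mp hw
  refine ⟨m, fun i => ?_, rfl⟩
  have hre : (∑ j, m j • h j).re = ∑ j, (m j : ℝ) * (h j).re := by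
    simp [Complex.re_sum, nsmul_eq_mul]
  have hterm : (m i : ℝ) * (h i).re ≤ R :=
    calc (m i : ℝ) * (h i).re
        ≤ ∑ j, (m j : ℝ) * (h j).re :=
          Finset.single_le_sum (f := fun j => (m j : ℝ) * (h j).re)
            (fun j _ => by have := hpos j; positivity) (Finset.mem_univ i)
      _ ≤ R := hre ▸ hR
  exact Nat.le_floor ((le_div_iff₀ (hpos i)).mpr hterm)

theorem exists_finite_re_pos_closure_translate {ι : Type*} [Finite ι] (h : ι → ℂ)
    (hpos : ∀ i, 0 < (h i).re) (c : ℂ) :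
    ∃ G : Set ℂ, G.Finite ∧ (∀ z ∈ G, 0 < z.re) ∧
      ∀ w ∈ AddSubmonoid.closure (range h), 0 < (c + w).re →
        c + w ∈ AddSubmonoid.closure G := by
  obtain ⟨B, hB⟩ := (Set.finite_range fun i => (h i).re).bddAbove
  set M := max c.re B
  set D :=
    (c + ·) '' {w | w ∈ AddSubmonoid.closure (range h) ∧ w.re ≤ M - c.re} ∩ {z | 0 < z.re}
  have hD : ∀ w ∈ AddSubmonoid.closure (range h), w.re ≤ M - c.re → 0 < (c + w).re →
      c + w ∈ AddSubmonoid.closure (range h ∪ D) :=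
    fun w hw hwM hcw => subset_closure (Or.inr ⟨⟨w, ⟨hw, hwM⟩, rfl⟩, hcw⟩)
  refine ⟨range h ∪ D, (Set.finite_range h).union
      (((finite_setOf_mem_closure_range_re_le h hpos _).image _).inter_of_left _), ?_, ?_⟩
  · rintro z (⟨i, rfl⟩ | ⟨-, hz⟩)
    exacts [hpos i, hz]
  · intro w hw
    induction hw using closure_induction_left with
    | zero => exact hD 0 (zero_mem _) (by simp [M])
    | add_left x hx y hy ih =>
      intro hpos_xy
      by_cases hpos_y : 0 < (c + y).re
      · rw [add_left_comm]
        exact add_mem (subset_closure (Or.inl hx)) (ih hpos_y)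
      · obtain ⟨i, rfl⟩ := hx
        have hxB : (h i).re ≤ B := hB ⟨i, rfl⟩
        refine hD _ (add_mem (subset_closure ⟨i, rfl⟩) hy) ?_ hpos_xy
        simp only [Complex.add_re] at hpos_y ⊢
        linarith [le_max_right c.re B]

/-- **Lemma 4.**  Let `λ_1, …, λ_N` have positive real parts, `ν ∈ ℂ`, and let `Γ'`
be the additive semigroup generated by `1, λ_1, …, λ_N`.  Then there is a finitely
generated additive semigroup `Γ''`, all of whose generators have positive real part,
containing every element of `-λ_N - ν + Γ'` that has positive real part. -/
theorem lemma4_semigroup {N : ℕ} (hN : 0 < N) (lam : Fin N → ℂ)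
    (hre : ∀ k, 0 < (lam k).re) (nu : ℂ) :
    ∃ τ : ℕ, ∃ g : Fin τ → ℂ, (∀ i, 0 < (g i).re) ∧
      ∀ z : ℂ, InGammaPrime lam z →
        0 < (-(lam ⟨N - 1, Nat.sub_lt hN one_pos⟩) - nu + z).re →
        InSemigroup g (-(lam ⟨N - 1, Nat.sub_lt hN one_pos⟩) - nu + z) := by
  have hpos : ∀ i, 0 < ((Fin.cons 1 lam : Fin (N + 1) → ℂ) i).re :=
    Fin.cases (by simp) hre
  obtain ⟨G, hGfin, hGpos, hG⟩ :=
    exists_finite_re_pos_closure_translate _ hpos (-(lam ⟨N - 1, Nat.sub_lt hN one_pos⟩) - nu)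
  obtain ⟨τ, g, -, rfl⟩ := hGfin.fin_param
  refine ⟨τ, g, fun i => hGpos _ ⟨i, rfl⟩, fun z hz hzpos => ?_⟩
  exact InSemigroup.of_mem_closure (hG z hz.mem_closure_range_cons hzpos)
    fun h0 => hzpos.ne' (by rw [h0, Complex.zero_re])
end
end

section
/- Lemma 5 (Vladimirov). Let G be the additive semigroup generated by complex numbers r_1, …, r_s all of whose real parts are positive. Then there exist complex numbers ρ_1, …, ρ_τ, linearly independent over ℤ, with Re ρ_i > 0 for all i, such that the additive semigroup Γ generated by ρ_1, …, ρ_τ contains G. -/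
noncomputable section

/-- The complex numbers `ρ 0, …, ρ (τ-1)` are linearly independent over `ℤ`. -/
def ZLinIndep {τ : ℕ} (ρ : Fin τ → ℂ) : Prop :=
  ∀ m : Fin τ → ℤ, (∑ i, (m i : ℂ) * ρ i) = 0 → m = 0

/-! Regard `ℂ` as a `ℚ`-vector space with the `ℚ`-linear functional `Re`. Adding the `r i` one
at a time, keep a `ℚ`-independent family `ρ` with positive real parts whose rational cone contains
the `r i` seen so far. A new `r` outside the `ℚ`-span of `ρ` is appended to `ρ`. A new
`r = ∑ q i • ρ i` inside it is handled by induction on the length of `ρ`: if `q i₀ < 0`, first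
cover the other `ρ i` and `w = r - q i₀ • ρ i₀` by a cone with generators `d j`, then shear these to
`d j - δ j • ρ i₀` with rational `δ j` small enough to keep the real parts positive and large enough
to put `r` into the cone. Independence survives because the span does not shrink and the number of
generators is unchanged. Finally, dividing `ρ` by a common denominator of the cone coefficients
turns membership in the rational cone into membership in the semigroup. -/

open Set Submodule
open PointedCone (hull subset_hull hull_le_span)

section RationalCone
variable {E : Type*} [AddCommGroup E] [Module ℚ E]

theorem PointedCone.exists_nsmul_mem_closure_of_mem_hull {s : Set E} {x : E}
    (hx : x ∈ hull ℚ s) : ∃ n : ℕ, 0 < n ∧ n • x ∈ AddSubmonoid.closure s := by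
  induction hx using Submodule.span_induction with
  | mem x hx => exact ⟨1, one_pos, by simpa using AddSubmonoid.subset_closure hx⟩
  | zero => exact ⟨1, one_pos, by simp [zero_mem]⟩
  | add x y _ _ hx hy =>
    obtain ⟨n, hn, hnx⟩ := hx
    obtain ⟨m, hm, hmy⟩ := hy
    refine ⟨n * m, Nat.mul_pos hn hm, ?_⟩
    rw [smul_add, mul_nsmul, mul_nsmul']
    exact add_mem (nsmul_mem hnx m) (nsmul_mem hmy n)
  | smul c x _ hx =>
    obtain ⟨n, hn, hnx⟩ := hx
    refine ⟨(c : ℚ).den * n, Nat.mul_pos (c : ℚ).pos hn, ?_⟩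
    have hnum : (((c : ℚ).num.toNat : ℤ) : ℚ) = (c : ℚ).den * c := by
      rw [Int.toNat_of_nonneg (Rat.num_nonneg.mpr c.2), mul_comm, Rat.mul_den_eq_num]
    have key : ((c : ℚ).den * n) • (c • x) = (c : ℚ).num.toNat • (n • x) := by
      rw [← Nonneg.coe_smul, ← Nat.cast_smul_eq_nsmul ℚ, ← Nat.cast_smul_eq_nsmul ℚ,
        ← Nat.cast_smul_eq_nsmul ℚ n, smul_smul, smul_smul]
      congr 1
      push_cast at hnum ⊢
      rw [hnum]; ring
    rw [key]
    exact nsmul_mem hnx _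

theorem exists_subset_closure_inv_smul_of_subset_hull {ι κ : Type*} [Finite ι]
    {v : ι → E} {ρ : κ → E} (h : range v ⊆ hull ℚ (range ρ)) :
    ∃ N : ℕ, 0 < N ∧ range v ⊆ AddSubmonoid.closure (range fun j => (N : ℚ)⁻¹ • ρ j) := by
  have := Fintype.ofFinite ι
  choose n hn hnv using fun i => PointedCone.exists_nsmul_mem_closure_of_mem_hull (h ⟨i, rfl⟩)
  obtain ⟨N, hN, hnN⟩ : ∃ N : ℕ, 0 < N ∧ ∀ i, n i ∣ N :=
    ⟨∏ i, n i, Finset.prod_pos fun i _ => hn i,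
      fun i => Finset.dvd_prod_of_mem n (Finset.mem_univ i)⟩
  refine ⟨N, hN, ?_⟩
  rintro _ ⟨i, rfl⟩
  obtain ⟨k, rfl⟩ := hnN i
  have hNv : (n i * k) • v i ∈ AddSubmonoid.closure (range ρ) := by
    rw [mul_nsmul]
    exact nsmul_mem (hnv i) k
  have := AddSubmonoid.mem_map_of_mem (DistribSMul.toAddMonoidHom E ((n i * k : ℕ) : ℚ)⁻¹) hNv
  rw [AddMonoidHom.map_mclosure, ← range_comp] at this
  have hN' : ((n i * k : ℕ) : ℚ) ≠ 0 := by exact_mod_cast hN.ne'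
  simp only [DistribSMul.toAddMonoidHom_apply, ← Nat.cast_smul_eq_nsmul ℚ, smul_smul,
    inv_mul_cancel₀ hN', one_smul, Function.comp_def] at this
  exact this

theorem LinearIndependent.of_subset_span {K V ι : Type*} [DivisionRing K] [AddCommGroup V]
    [Module K V] [Fintype ι] {v w : ι → V} (hv : LinearIndependent K v)
    (hvw : range v ⊆ span K (range w)) : LinearIndependent K w := by
  have := Module.Finite.span_of_finite K (finite_range w)
  rw [linearIndependent_iff_card_eq_finrank_span] at hv ⊢
  refine le_antisymm ?_ (finrank_range_le_card w)
  rw [hv]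
  exact Submodule.finrank_mono (span_le.mpr hvw)

variable (L : E →ₗ[ℚ] ℝ)

theorem exists_pos_hull_sub_smul_mem {n : ℕ} {u : E} (hu : 0 < L u) {d : Fin n → E}
    (hd : ∀ j, 0 < L (d j)) {w : E} (hw : w ∈ hull ℚ (range d)) {a : ℚ}
    (ha : 0 ≤ a) (haw : a * L u < L w) :
    ∃ ρ : Fin (n + 1) → E, (∀ i, 0 < L (ρ i)) ∧
      hull ℚ (insert u (range d)) ≤ hull ℚ (range ρ) ∧
      w - a • u ∈ hull ℚ (range ρ) := by
  obtain ⟨c, hc⟩ := (mem_span_range_iff_exists_fun _).mp hw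
  simp only [← Nonneg.coe_smul] at hc
  have hLw : 0 < L w := (mul_nonneg (by exact_mod_cast ha) hu.le).trans_lt haw
  have hgap : ∀ j, a * L (d j) / L w < L (d j) / L u := fun j => by
    have := mul_lt_mul_of_pos_right haw (hd j)
    rw [div_lt_div_iff₀ hLw hu]
    linarith
  -- The lower bound on `δ j` makes the coefficient of `u` in `hwu` below nonnegative, the upper
  -- bound keeps `L (d j - δ j • u)` positive.
  choose δ hδlo hδhi using fun j => exists_rat_btwn (hgap j)
  have hδ : ∀ j, 0 ≤ δ j := fun j => by
    have ha' : (0 : ℝ) ≤ a := by exact_mod_cast ha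
    exact_mod_cast (div_nonneg (mul_nonneg ha' (hd j).le) hLw.le).trans (hδlo j).le
  have hcδ : a ≤ ∑ j, (c j : ℚ) * δ j := by
    have key : ∑ j, (c j : ℝ) * (a * L (d j) / L w) = a := by
      have hLw' : L w = ∑ j, (c j : ℝ) * L (d j) := by
        simp only [← hc, map_sum, map_smul, Rat.smul_def]
      simp only [mul_div_assoc', ← Finset.sum_div, mul_left_comm _ (a : ℝ), ← Finset.mul_sum,
        ← hLw', mul_div_cancel_right₀ _ hLw.ne']
    have : (a : ℝ) ≤ ∑ j, (c j : ℚ) * (δ j : ℝ) := key ▸ Finset.sum_le_sum fun j _ =>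
      mul_le_mul_of_nonneg_left (hδlo j).le (by exact_mod_cast (c j).2)
    exact_mod_cast this
  set ρ : Fin (n + 1) → E := Fin.cons u fun j => d j - δ j • u
  have hu_mem : u ∈ hull ℚ (range ρ) := subset_hull ⟨0, rfl⟩
  have hsucc_mem : ∀ j, d j - δ j • u ∈ hull ℚ (range ρ) :=
    fun j => subset_hull ⟨j.succ, rfl⟩
  have hpos : ∀ i, 0 < L (ρ i) := Fin.cases hu fun j => by
    have := (lt_div_iff₀ hu).mp (hδhi j)
    simp only [ρ, Fin.cons_succ, map_sub, map_smul, Rat.smul_def]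
    linarith
  refine ⟨ρ, hpos, span_le.mpr (insert_subset hu_mem ?_), ?_⟩
  · rintro _ ⟨j, rfl⟩
    rw [← sub_add_cancel (d j) (δ j • u)]
    exact add_mem (hsucc_mem j) (PointedCone.smul_mem _ (hδ j) hu_mem)
  · have hwu : w - a • u =
        ∑ j, (c j : ℚ) • (d j - δ j • u) + (∑ j, (c j : ℚ) * δ j - a) • u := by
      simp only [smul_sub, Finset.sum_sub_distrib, smul_smul, sub_smul, Finset.sum_smul, hc]
      abel
    rw [hwu]
    exact add_mem (sum_mem fun j _ => PointedCone.smul_mem _ (c j).2 (hsucc_mem j))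
      (PointedCone.smul_mem _ (sub_nonneg.mpr hcδ) hu_mem)

theorem exists_pos_hull_insert_le {n : ℕ} {ρ : Fin n → E} (hρ : ∀ i, 0 < L (ρ i)) {v : E}
    (hv : v ∈ span ℚ (range ρ)) (hLv : 0 < L v) :
    ∃ ρ' : Fin n → E, (∀ i, 0 < L (ρ' i)) ∧
      hull ℚ (insert v (range ρ)) ≤ hull ℚ (range ρ') := by
  induction n generalizing v with
  | zero =>
    obtain ⟨q, rfl⟩ := (mem_span_range_iff_exists_fun ℚ).mp hv
    simp at hLv
  | succ n ih =>
    obtain ⟨q, rfl⟩ := (mem_span_range_iff_exists_fun ℚ).mp hv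
    by_cases hq : ∀ i, 0 ≤ q i
    · refine ⟨ρ, hρ, span_le.mpr (insert_subset ?_ subset_hull)⟩
      exact sum_mem fun i _ => PointedCone.smul_mem _ (hq i) (subset_hull ⟨i, rfl⟩)
    push Not at hq
    obtain ⟨i₀, hi₀⟩ := hq
    rw [Fin.sum_univ_succAbove _ i₀] at hLv ⊢
    set w := ∑ j, q (i₀.succAbove j) • ρ (i₀.succAbove j)
    have hLw : -q i₀ * L (ρ i₀) < L w := by
      rw [map_add, map_smul, Rat.smul_def] at hLv
      linarith
    have hq₀ : 0 ≤ -q i₀ := neg_nonneg.mpr hi₀.le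
    obtain ⟨d, hd, hwd⟩ := ih (fun j => hρ _) ((mem_span_range_iff_exists_fun ℚ).mpr ⟨_, rfl⟩)
      ((mul_nonneg (by exact_mod_cast hq₀) (hρ i₀).le).trans_lt hLw)
    obtain ⟨ρ', hρ', hdρ', hvρ'⟩ := exists_pos_hull_sub_smul_mem L (hρ i₀) hd
      (hwd (subset_hull (mem_insert _ _))) hq₀ (by exact_mod_cast hLw)
    rw [neg_smul, sub_neg_eq_add, add_comm _ (q i₀ • ρ i₀)] at hvρ'
    refine ⟨ρ', hρ', span_le.mpr (insert_subset hvρ' ?_)⟩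
    rintro _ ⟨i, rfl⟩
    rcases Fin.eq_self_or_eq_succAbove i₀ i with rfl | ⟨j, rfl⟩
    · exact hdρ' (subset_hull (mem_insert _ _))
    · exact hdρ' (span_mono (subset_insert _ _)
        (hwd (subset_hull (mem_insert_of_mem _ ⟨j, rfl⟩))))

theorem exists_linearIndependent_pos_hull {s : ℕ} (v : Fin s → E) (hv : ∀ i, 0 < L (v i)) :
    ∃ τ : ℕ, ∃ ρ : Fin τ → E, LinearIndependent ℚ ρ ∧ (∀ j, 0 < L (ρ j)) ∧
      range v ⊆ hull ℚ (range ρ) := by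
  induction s with
  | zero => exact ⟨0, Fin.elim0, linearIndependent_empty_type, (·.elim0), by simp [range_eq_empty]⟩
  | succ s ih =>
    obtain ⟨τ, ρ, hind, hρ, hvρ⟩ := ih (Fin.tail v) (fun i => hv _)
    have hv_le : range v ⊆ hull ℚ (insert (v 0) (range ρ)) := by
      rw [← Fin.cons_self_tail v, Fin.range_cons]
      exact insert_subset (subset_hull (mem_insert _ _))
        (hvρ.trans (span_mono (subset_insert _ _)))
    by_cases h0 : v 0 ∈ span ℚ (range ρ)
    · obtain ⟨ρ', hρ', hle⟩ := exists_pos_hull_insert_le L hρ h0 (hv 0)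
      have hρρ' : range ρ ⊆ hull ℚ (range ρ') :=
        (subset_hull.trans (span_mono (subset_insert _ _))).trans hle
      exact ⟨τ, ρ', hind.of_subset_span (hρρ'.trans (hull_le_span ℚ _)), hρ',
        hv_le.trans hle⟩
    · refine ⟨τ + 1, Fin.cons (v 0) ρ, linearIndependent_finCons.mpr ⟨hind, h0⟩,
        Fin.cases (hv 0) hρ, ?_⟩
      rwa [Fin.range_cons]

end RationalCone

section Complex
variable {τ : ℕ} {g : Fin τ → ℂ} {z : ℂ}

theorem InSemigroup.mem_closure (h : InSemigroup g z) : z ∈ AddSubmonoid.closure (range g) := by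
  obtain ⟨m, -, rfl⟩ := h
  exact AddSubmonoid.mem_closure_range_iff_of_fintype.mpr ⟨m, by simp [nsmul_eq_mul]⟩

theorem inSemigroup_of_mem_closure (h : z ∈ AddSubmonoid.closure (range g)) (hz : z ≠ 0) :
    InSemigroup g z := by
  obtain ⟨m, rfl⟩ := AddSubmonoid.mem_closure_range_iff_of_fintype.mp h
  refine ⟨m, ?_, by simp [nsmul_eq_mul]⟩
  rintro rfl
  simp at hz

theorem InSemigroup.re_pos (hg : ∀ i, 0 < (g i).re) (h : InSemigroup g z) : 0 < z.re := by
  obtain ⟨m, hm, rfl⟩ := h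
  obtain ⟨i, hi⟩ := Function.ne_iff.mp hm
  have hterm : ∀ j, ((m j : ℂ) * g j).re = m j * (g j).re := fun j => by simp
  simp only [Complex.re_sum, hterm]
  exact Finset.sum_pos' (fun j _ => mul_nonneg (Nat.cast_nonneg _) (hg j).le)
    ⟨i, Finset.mem_univ i, mul_pos (Nat.cast_pos.mpr (Nat.pos_of_ne_zero hi)) (hg i)⟩

theorem zLinIndep_of_linearIndependent (h : LinearIndependent ℚ g) : ZLinIndep g := by
  intro m hm
  funext i
  exact Fintype.linearIndependent_iff.mp (h.restrict_scalars' ℤ) m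
    (by simpa [zsmul_eq_mul] using hm) i

end Complex

/-- **Lemma 5 (Vladimirov).**  Let `G` be the additive semigroup generated by complex
numbers `r_1, …, r_s` with positive real parts.  Then there exist complex numbers
`ρ_1, …, ρ_τ`, linearly independent over `ℤ` and with positive real parts, such that
the additive semigroup they generate contains `G`. -/
theorem lemma5_vladimirov {s : ℕ} (r : Fin s → ℂ) (hre : ∀ i, 0 < (r i).re) :
    ∃ τ : ℕ, ∃ ρ : Fin τ → ℂ, ZLinIndep ρ ∧ (∀ i, 0 < (ρ i).re) ∧
      ∀ z : ℂ, InSemigroup r z → InSemigroup ρ z := by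
  obtain ⟨τ, ρ, hind, hpos, hr⟩ :=
    exists_linearIndependent_pos_hull Complex.reAddGroupHom.toRatLinearMap r hre
  obtain ⟨N, hN, hrN⟩ := exists_subset_closure_inv_smul_of_subset_hull hr
  have hN' : (N : ℚ)⁻¹ ≠ 0 := by positivity
  refine ⟨τ, fun j => (N : ℚ)⁻¹ • ρ j,
    zLinIndep_of_linearIndependent (hind.units_smul fun _ => Units.mk0 _ hN'), fun j => ?_,
    fun z hz => inSemigroup_of_mem_closure (AddSubmonoid.closure_le.mpr hrN hz.mem_closure) ?_⟩
  · have : 0 < (ρ j).re := hpos j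
    rw [Complex.smul_re, Rat.smul_def]
    positivity
  · exact fun h => (hz.re_pos hre).ne' (by simp [h])
end
end
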